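/- If a unitary representation U of a finite group G induces a unitary 2-design on ℂ^d, then U is irreducible. -/

import Mathlib

open MeasureTheory Matrix
open scoped Kronecker ComplexConjugate

noncomputable section

variable {ι : Type} [Fintype ι] [DecidableEq ι]

abbrev UG (ι : Type) [Fintype ι] [DecidableEq ι] := Matrix.unitaryGroup ι ℂ

instance : IsTopologicalGroup (UG ι) where
  continuous_mul := by
    apply Continuous.subtype_mk
    exact (continuous_subtype_val.comp continuous_fst).matrix_mul
      (continuous_subtype_val.comp continuous_snd)
  continuous_inv := by
    apply Continuous.subtype_mk
    exact continuous_subtype_val.matrix_conjTranspose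

theorem isCompact_UG : IsCompact (Matrix.unitaryGroup ι ℂ : Set (Matrix ι ι ℂ)) := by
  have hK : IsCompact (Set.univ.pi fun _ : ι => Set.univ.pi fun _ : ι =>
      Metric.closedBall (0:ℂ) 1) :=
    isCompact_univ_pi fun _ => isCompact_univ_pi fun _ => isCompact_closedBall _ _
  have hof : Continuous (Matrix.of : (ι → ι → ℂ) → Matrix ι ι ℂ) := continuous_id
  have hK' := hK.image hof
  have hcl : IsClosed (Matrix.unitaryGroup ι ℂ : Set (Matrix ι ι ℂ)) := by
    have he : (Matrix.unitaryGroup ι ℂ : Set (Matrix ι ι ℂ)) =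
        (fun A : Matrix ι ι ℂ => A * star A) ⁻¹' {1} := by
      ext A
      simp [Matrix.mem_unitaryGroup_iff]
    rw [he]
    exact IsClosed.preimage (continuous_id.matrix_mul continuous_id.matrix_conjTranspose)
      isClosed_singleton
  apply hK'.of_isClosed_subset hcl
  intro A hA
  have h1 : star A * A = 1 := (Matrix.mem_unitaryGroup_iff').1 hA
  refine ⟨fun i j => A i j, ?_, rfl⟩
  intro i _
  intro j _
  have h2 : ∑ k, Complex.normSq (A k j) = 1 := by
    have h0 := congrFun (congrFun h1 j) j
    simp only [Matrix.mul_apply, Matrix.one_apply_eq, Matrix.star_apply] at h0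
    have h3 : ∀ k : ι, star (A k j) * A k j = (Complex.normSq (A k j) : ℂ) := by
      intro k
      rw [Complex.star_def, Complex.normSq_eq_conj_mul_self]
    simp only [h3] at h0
    exact_mod_cast (by exact_mod_cast h0 : ((∑ k, Complex.normSq (A k j) : ℝ) : ℂ) = 1)
  simp only [Metric.mem_closedBall, dist_zero_right]
  have h4 : Complex.normSq (A i j) ≤ 1 := by
    rw [← h2]
    exact Finset.single_le_sum (f := fun k => Complex.normSq (A k j))
      (fun k _ => Complex.normSq_nonneg _) (Finset.mem_univ i)
  have h5 := Complex.normSq_eq_norm_sq (A i j)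
  nlinarith [norm_nonneg (A i j)]

instance : CompactSpace (UG ι) := isCompact_iff_compactSpace.mp isCompact_UG

instance : MeasurableSpace (UG ι) := borel _
instance : BorelSpace (UG ι) := ⟨rfl⟩

/-- The normalized Haar (probability) measure on the unitary group. -/
def haarUG (ι : Type) [Fintype ι] [DecidableEq ι] : Measure (UG ι) :=
  Measure.haarMeasure
    (⟨⟨Set.univ, isCompact_univ⟩, by rw [interior_univ]; exact Set.univ_nonempty⟩ :
      TopologicalSpace.PositiveCompacts (UG ι))

/-- Haar average of (U⊗U) ρ (U⊗U)†, defined entrywise. -/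
def haarTwirl (ι : Type) [Fintype ι] [DecidableEq ι]
    (ρ : Matrix (ι × ι) (ι × ι) ℂ) : Matrix (ι × ι) (ι × ι) ℂ :=
  Matrix.of fun i j =>
    ∫ u : UG ι,
      ((((u : Matrix ι ι ℂ) ⊗ₖ (u : Matrix ι ι ℂ)) * ρ *
        ((u : Matrix ι ι ℂ) ⊗ₖ (u : Matrix ι ι ℂ))ᴴ) i j) ∂(haarUG ι)

/-- A finite family of matrices is a unitary 2-design. -/
def IsUnitaryTwoDesign {κ : Type} [Fintype κ] (Us : κ → Matrix ι ι ℂ) : Prop :=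
  (∀ k, Us k ∈ Matrix.unitaryGroup ι ℂ) ∧
  ∀ ρ : Matrix (ι × ι) (ι × ι) ℂ,
    ((Fintype.card κ : ℂ))⁻¹ • (∑ k, (Us k ⊗ₖ Us k) * ρ * (Us k ⊗ₖ Us k)ᴴ) = haarTwirl ι ρ

/-- The frame potential. -/
def framePotential {κ : Type} [Fintype κ] (Us : κ → Matrix ι ι ℂ) : ℝ :=
  ((Fintype.card κ : ℝ) ^ 2)⁻¹ *
    ∑ k : κ, ∑ k' : κ, ‖Matrix.trace ((Us k)ᴴ * Us k')‖ ^ 4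

/-!
Let `P` be a `G`-equivariant projection onto an invariant subspace `W`. Then `P ⊗ P` commutes with
every `U_g ⊗ U_g`, so the design identity says that the Haar twirl fixes `P ⊗ P`; by invariance of
Haar measure, `P ⊗ P` then commutes with `V ⊗ V` for every unitary `V`. Applied to `x ⊗ x` with
`x ∈ W` this gives `Vx ⊗ Vx = PVx ⊗ PVx`, so `Vx` is a multiple of `PVx ∈ W`. Hence `W` is invariant
under the whole unitary group, which acts transitively on unit vectors, so `W` is `0` or everything.
-/

theorem Commute.kronecker {R n : Type*} [CommSemiring R] [Fintype n] {A B C D : Matrix n n R}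
    (hAB : Commute A B) (hCD : Commute C D) : Commute (A ⊗ₖ C) (B ⊗ₖ D) := by
  simp only [Commute, SemiconjBy, ← mul_kronecker_mul, hAB.eq, hCD.eq]

namespace Matrix

theorem kronecker_mulVec_vec_vecMulVec {R l m n p : Type*} [CommSemiring R] [Fintype m]
    [Fintype n] (A : Matrix l m R) (B : Matrix p n R) (x : m → R) (y : n → R) :
    (B ⊗ₖ A) *ᵥ vec (vecMulVec x y) = vec (vecMulVec (A *ᵥ x) (B *ᵥ y)) := by
  rw [kronecker_mulVec_vec, mul_vecMulVec, vecMulVec_mul, vecMul_transpose]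

theorem exists_smul_eq_of_vecMulVec_self_eq {K n : Type*} [Field K] {y z : n → K}
    (h : vecMulVec y y = vecMulVec z z) : ∃ c : K, y = c • z := by
  by_cases hy : y = 0
  · exact ⟨0, by simp [hy]⟩
  obtain ⟨i, hi⟩ : ∃ i, y i ≠ 0 := Function.ne_iff.1 hy
  refine ⟨(y i)⁻¹ * z i, funext fun j => ?_⟩
  have hij : y i * y j = z i * z j := by simpa [vecMulVec_apply] using congrFun (congrFun h i) j
  simp only [Pi.smul_apply, smul_eq_mul]
  field_simp
  linear_combination hij

theorem mul_of_integral_mul {𝕜 X l m n p : Type*} [RCLike 𝕜] [Fintype m] [Fintype n]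
    [MeasurableSpace X] {μ : Measure X} {F : X → Matrix m n 𝕜}
    (hF : ∀ i j, Integrable (fun x => F x i j) μ) (A : Matrix l m 𝕜) (B : Matrix n p 𝕜) :
    A * of (fun i j => ∫ x, F x i j ∂μ) * B = of fun i j => ∫ x, (A * F x * B) i j ∂μ := by
  ext i j
  simp only [mul_apply, of_apply, Finset.sum_mul]
  rw [integral_finsetSum _ fun l _ =>
    integrable_finsetSum _ fun k _ => ((hF k l).const_mul _).mul_const _]
  refine Finset.sum_congr rfl fun l _ => ?_
  rw [integral_finsetSum _ fun k _ => ((hF k l).const_mul _).mul_const _]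
  simp only [integral_mul_const, integral_const_mul]

theorem exists_mem_unitaryGroup_toEuclideanLin_eq {n : Type*} [Fintype n] [DecidableEq n]
    {e w : EuclideanSpace ℂ n} (he : ‖e‖ = 1) (hw : ‖w‖ = 1) :
    ∃ V ∈ unitaryGroup n ℂ, V.toEuclideanLin e = w := by
  obtain ⟨i₀⟩ : Nonempty n := by
    by_contra h
    rw [not_nonempty_iff] at h
    simp [Subsingleton.elim e 0] at he
  have extend (v : EuclideanSpace ℂ n) (hv : ‖v‖ = 1) :
      ∃ b : OrthonormalBasis n ℂ (EuclideanSpace ℂ n), b i₀ = v := by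
    obtain ⟨b, hb⟩ := Orthonormal.exists_orthonormalBasis_extension_of_card_eq
      finrank_euclideanSpace (v := fun _ => v) (s := {i₀})
      ⟨fun _ => hv, fun i j hij => absurd (Subsingleton.elim i j) hij⟩
    exact ⟨b, hb i₀ rfl⟩
  obtain ⟨bₑ, rfl⟩ := extend e he
  obtain ⟨b_w, rfl⟩ := extend w hw
  let std := (EuclideanSpace.basisFun n ℂ).toBasis
  let f := bₑ.repr.trans b_w.repr.symm
  refine ⟨LinearMap.toMatrix std std f, f.toMatrix_mem_unitaryGroup _ _, ?_⟩
  rw [toEuclideanLin_eq_toLin_orthonormal, toLin_toMatrix]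
  simp [f]

end Matrix

theorem Submodule.exists_equivariant_projection {K ι G : Type*} [Field K] [CharZero K] [Fintype ι]
    [DecidableEq ι] [Group G] [Fintype G] (π : G →* Matrix ι ι K) (W : Submodule K (ι → K))
    (hW : ∀ g, ∀ x ∈ W, π g *ᵥ x ∈ W) :
    ∃ P : Matrix ι ι K, (∀ g, Commute (π g) P) ∧ (∀ x, P *ᵥ x ∈ W) ∧ ∀ x ∈ W, P *ᵥ x = x := by
  -- Maschke: average an arbitrary projection `Q` onto `W` over the group.
  obtain ⟨r, hr⟩ := W.subtype.exists_leftInverse_of_injective W.ker_subtype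
  set Q := LinearMap.toMatrix' (W.subtype ∘ₗ r)
  have hQW (x : ι → K) : Q *ᵥ x ∈ W := by simp [Q]
  have hQid (x : ι → K) (hx : x ∈ W) : Q *ᵥ x = x := by
    simpa [Q] using congrArg Subtype.val (LinearMap.congr_fun hr ⟨x, hx⟩)
  refine ⟨(Fintype.card G : K)⁻¹ • ∑ g, π g * Q * π g⁻¹, fun h => ?_, fun x => ?_, fun x hx => ?_⟩
  · refine Commute.smul_right ?_ _
    calc π h * ∑ g, π g * Q * π g⁻¹ = ∑ g, π (h * g) * Q * π g⁻¹ := by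
          simp only [Finset.mul_sum, ← Matrix.mul_assoc, ← map_mul]
      _ = (∑ g, π g * Q * π g⁻¹) * π h := by
          simp only [Finset.sum_mul, Matrix.mul_assoc, ← map_mul]
          conv_rhs => rw [← Equiv.sum_comp (Equiv.mulLeft h)]
          simp only [Equiv.coe_mulLeft, _root_.mul_inv_rev, inv_mul_cancel_right]
  · rw [smul_mulVec, sum_mulVec]
    refine W.smul_mem _ (W.sum_mem fun g _ => ?_)
    rw [← mulVec_mulVec, ← mulVec_mulVec]
    exact hW g _ (hQW _)
  · have hterm (g : G) : (π g * Q * π g⁻¹) *ᵥ x = x := by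
      rw [← mulVec_mulVec, ← mulVec_mulVec, hQid _ (hW g⁻¹ x hx), mulVec_mulVec, ← map_mul,
        mul_inv_cancel, map_one, one_mulVec]
    rw [smul_mulVec, sum_mulVec, Finset.sum_congr rfl fun g _ => hterm g, Finset.sum_const,
      Finset.card_univ, ← Nat.cast_smul_eq_nsmul K, smul_smul, inv_mul_cancel₀ (by simp),
      one_smul]

open WithLp in
theorem Submodule.eq_bot_or_eq_top_of_forall_unitary_mulVec_mem {n : Type*} [Fintype n]
    [DecidableEq n] (W : Submodule ℂ (n → ℂ))
    (hW : ∀ V ∈ unitaryGroup n ℂ, ∀ x ∈ W, V *ᵥ x ∈ W) : W = ⊥ ∨ W = ⊤ := by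
  refine or_iff_not_imp_left.2 fun hbot => eq_top_iff.2 fun y _ => ?_
  obtain ⟨x, hxW, hx⟩ := W.exists_mem_ne_zero_of_ne_bot hbot
  rcases eq_or_ne y 0 with rfl | hy
  · exact W.zero_mem
  have unit (v : n → ℂ) (hv : v ≠ 0) : ‖(‖toLp 2 v‖ : ℂ)⁻¹ • toLp 2 v‖ = 1 :=
    norm_smul_inv_norm (E := EuclideanSpace ℂ n) (by simpa using hv)
  obtain ⟨V, hV, hVxy⟩ := exists_mem_unitaryGroup_toEuclideanLin_eq (unit x hx) (unit y hy)
  have hy' : y = (‖toLp 2 y‖ : ℂ) • V *ᵥ (‖toLp 2 x‖ : ℂ)⁻¹ • x := by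
    have hVx : (‖toLp 2 x‖ : ℂ)⁻¹ • V *ᵥ x = (‖toLp 2 y‖ : ℂ)⁻¹ • y := by
      simpa using congrArg ofLp hVxy
    rw [Matrix.mulVec_smul, hVx, smul_smul, mul_inv_cancel₀ (by simpa using hy), one_smul]
  rw [hy']
  exact W.smul_mem _ (hW V hV _ (W.smul_mem _ hxW))

instance : (haarUG ι).IsMulLeftInvariant := by unfold haarUG; infer_instance

instance : IsFiniteMeasureOnCompacts (haarUG ι) := by unfold haarUG; infer_instance

theorem integrable_kronecker_conj_apply (ρ : Matrix (ι × ι) (ι × ι) ℂ) (i j : ι × ι) :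
    Integrable (fun u : UG ι => (((u : Matrix ι ι ℂ) ⊗ₖ (u : Matrix ι ι ℂ)) * ρ *
      ((u : Matrix ι ι ℂ) ⊗ₖ (u : Matrix ι ι ℂ))ᴴ) i j) (haarUG ι) := by
  have hU : Continuous fun u : UG ι => (u : Matrix ι ι ℂ) ⊗ₖ (u : Matrix ι ι ℂ) :=
    continuous_matrix fun p q =>
      (continuous_subtype_val.matrix_elem _ _).mul (continuous_subtype_val.matrix_elem _ _)
  exact (((hU.matrix_mul continuous_const).matrix_mul hU.matrix_conjTranspose).matrix_elem i j
    ).integrable_of_hasCompactSupport (.of_compactSpace _)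

theorem kronecker_self_mul_haarTwirl_mul (ρ : Matrix (ι × ι) (ι × ι) ℂ) (v : UG ι) :
    ((v : Matrix ι ι ℂ) ⊗ₖ (v : Matrix ι ι ℂ)) * haarTwirl ι ρ *
      ((v : Matrix ι ι ℂ) ⊗ₖ (v : Matrix ι ι ℂ))ᴴ = haarTwirl ι ρ := by
  let F (u : UG ι) : Matrix (ι × ι) (ι × ι) ℂ :=
    ((u : Matrix ι ι ℂ) ⊗ₖ (u : Matrix ι ι ℂ)) * ρ * ((u : Matrix ι ι ℂ) ⊗ₖ (u : Matrix ι ι ℂ))ᴴ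
  have hvu (u : UG ι) :
      ((v : Matrix ι ι ℂ) ⊗ₖ (v : Matrix ι ι ℂ)) * F u * ((v : Matrix ι ι ℂ) ⊗ₖ (v : Matrix ι ι ℂ))ᴴ =
        F (v * u) := by
    simp only [F, Submonoid.coe_mul, mul_kronecker_mul, conjTranspose_mul, Matrix.mul_assoc]
  calc _ = of fun i j => ∫ u, (((v : Matrix ι ι ℂ) ⊗ₖ (v : Matrix ι ι ℂ)) * F u *
          ((v : Matrix ι ι ℂ) ⊗ₖ (v : Matrix ι ι ℂ))ᴴ) i j ∂haarUG ι :=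
        mul_of_integral_mul (integrable_kronecker_conj_apply ρ) _ _
    _ = haarTwirl ι ρ := by
      simp only [hvu]
      exact congrArg of (funext₂ fun i j => integral_mul_left_eq_self (fun u => F u i j) v)

namespace IsUnitaryTwoDesign

variable {κ : Type} [Fintype κ] {Us : κ → Matrix ι ι ℂ}

theorem haarTwirl_eq_self [Nonempty κ] (hD : IsUnitaryTwoDesign Us)
    {ρ : Matrix (ι × ι) (ι × ι) ℂ} (hρ : ∀ k, Commute (Us k ⊗ₖ Us k) ρ) :
    haarTwirl ι ρ = ρ := by
  have hconj (k : κ) : (Us k ⊗ₖ Us k) * ρ * (Us k ⊗ₖ Us k)ᴴ = ρ := by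
    rw [(hρ k).eq, Matrix.mul_assoc, ← star_eq_conjTranspose,
      Unitary.mul_star_self_of_mem (kronecker_mem_unitary (hD.1 k) (hD.1 k)), Matrix.mul_one]
  rw [← hD.2 ρ, Finset.sum_congr rfl fun k _ => hconj k, Finset.sum_const, Finset.card_univ,
    ← Nat.cast_smul_eq_nsmul ℂ, smul_smul, inv_mul_cancel₀ (by simp), one_smul]

theorem commute_kronecker_self [Nonempty κ] (hD : IsUnitaryTwoDesign Us)
    {ρ : Matrix (ι × ι) (ι × ι) ℂ} (hρ : ∀ k, Commute (Us k ⊗ₖ Us k) ρ)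
    {V : Matrix ι ι ℂ} (hV : V ∈ unitaryGroup ι ℂ) : Commute (V ⊗ₖ V) ρ := by
  have hVρ := kronecker_self_mul_haarTwirl_mul ρ ⟨V, hV⟩
  rw [hD.haarTwirl_eq_self hρ] at hVρ
  calc (V ⊗ₖ V) * ρ = (V ⊗ₖ V) * ρ * (star (V ⊗ₖ V) * (V ⊗ₖ V)) := by
        rw [Unitary.star_mul_self_of_mem (kronecker_mem_unitary hV hV), Matrix.mul_one]
    _ = ρ * (V ⊗ₖ V) := by rw [← Matrix.mul_assoc, star_eq_conjTranspose]; simp only [hVρ]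

end IsUnitaryTwoDesign

/-- if a unitary representation of a finite group induces a
unitary 2-design, then the representation is irreducible. -/
theorem twoDesign_implies_irreducible (d : ℕ)
    (G : Type) [Group G] [Fintype G] (π : G →* Matrix.unitaryGroup (Fin d) ℂ)
    (hD : IsUnitaryTwoDesign (fun g : G => (π g : Matrix (Fin d) (Fin d) ℂ))) :
    ∀ W : Submodule ℂ (Fin d → ℂ),
      (∀ g : G, ∀ x ∈ W, Matrix.mulVec (π g : Matrix (Fin d) (Fin d) ℂ) x ∈ W) →
      W = ⊥ ∨ W = ⊤ := by
  intro W hW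
  obtain ⟨P, hPπ, hPW, hPid⟩ :=
    W.exists_equivariant_projection ((unitaryGroup (Fin d) ℂ).subtype.comp π) hW
  have hPP (V : Matrix (Fin d) (Fin d) ℂ) (hV : V ∈ unitaryGroup (Fin d) ℂ) :
      Commute (V ⊗ₖ V) (P ⊗ₖ P) :=
    hD.commute_kronecker_self (fun g => (hPπ g).kronecker (hPπ g)) hV
  refine W.eq_bot_or_eq_top_of_forall_unitary_mulVec_mem fun V hV x hx => ?_
  have hVx : vecMulVec (V *ᵥ x) (V *ᵥ x) = vecMulVec (P *ᵥ V *ᵥ x) (P *ᵥ V *ᵥ x) := by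
    have := congrArg (· *ᵥ vec (vecMulVec x x)) (hPP V hV).eq
    simp only [← mulVec_mulVec, kronecker_mulVec_vec_vecMulVec, hPid x hx] at this
    exact vec_inj.1 this
  obtain ⟨c, hc⟩ := exists_smul_eq_of_vecMulVec_self_eq hVx
  rw [hc]
  exact W.smul_mem c (hPW _)
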